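/- arXiv:cs/0605017 — 3 statements merged into one kernel-verified Lean document; each statement's English description precedes it below -/
import Mathlib

section
/- Let D be a consistent domain description. For any state s, any a-state δ with δ ⊆ s, and any non-sensing action a executable in δ, there exists an a-state δ' such that (i) Res_D(a, δ) = {δ'}, and (ii) δ' ⊆ s' for every state s' ∈ Res^c_D(a, s). -/
noncomputable section
attribute [local instance] Classical.propDecidable

/-- A literal over the set of fluents `F`: a fluent together with a sign
(`true` for the fluent `f` itself, `false` for its negation `¬f`). -/
abbrev Lit (F : Type) : Type := F × Bool

/-- The complement `¬l` of a literal `l` (so that `¬¬f = f`). -/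
def Lit.compl {F : Type} (l : Lit F) : Lit F := (l.1, !l.2)

/-- `¬γ = {¬l | l ∈ γ}`. -/
def negLits {F : Type} (γ : Set (Lit F)) : Set (Lit F) := Lit.compl '' γ

/-- A set of literals is consistent if it contains no complementary pair. -/
def ConsistentLits {F : Type} (σ : Set (Lit F)) : Prop :=
  ∀ l : Lit F, ¬(l ∈ σ ∧ Lit.compl l ∈ σ)

/-- A static causal law `if(head, body)`: the body is a finite nonempty set of literals. -/
structure StaticLaw (F : Type) where
  head : Lit F
  body : Finset (Lit F)
  body_nonempty : body.Nonempty

/-- A set of literals `σ` satisfies the static causal law `r` if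
`body ⊆ σ` implies `head ∈ σ`. -/
def SatLaw {F : Type} (σ : Set (Lit F)) (r : StaticLaw F) : Prop :=
  ↑r.body ⊆ σ → r.head ∈ σ

/-- `σ` satisfies every static causal law in `D`. -/
def ClosedUnder {F : Type} (D : Set (StaticLaw F)) (σ : Set (Lit F)) : Prop :=
  ∀ r ∈ D, SatLaw σ r

/-- `Cl D σ`: the smallest set of literals containing `σ` and satisfying every
static causal law in `D`. -/
def Cl {F : Type} (D : Set (StaticLaw F)) (σ : Set (Lit F)) : Set (Lit F) :=
  ⋂₀ {τ | σ ⊆ τ ∧ ClosedUnder D τ}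

/-- An interpretation: for each fluent exactly one of `f`, `¬f` belongs to it
(complete and consistent). -/
def Interp {F : Type} (σ : Set (Lit F)) : Prop :=
  ∀ f : F, (((f, true) : Lit F) ∈ σ ∨ ((f, false) : Lit F) ∈ σ) ∧
    ¬(((f, true) : Lit F) ∈ σ ∧ ((f, false) : Lit F) ∈ σ)

/-- A state: an interpretation satisfying all static causal laws in `D`. -/
def IsState {F : Type} (D : Set (StaticLaw F)) (s : Set (Lit F)) : Prop :=
  Interp s ∧ ClosedUnder D s

/-- An a-state: a consistent set of literals satisfying all static causal laws in `D`. -/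
def AState {F : Type} (D : Set (StaticLaw F)) (δ : Set (Lit F)) : Prop :=
  ConsistentLits δ ∧ ClosedUnder D δ

/-- A set of literals is valid if it is contained in some state. -/
def ValidA {F : Type} (D : Set (StaticLaw F)) (δ : Set (Lit F)) : Prop :=
  ∃ s, IsState D s ∧ δ ⊆ s

/-- A domain description: executability conditions `executable(a, ψ)`,
dynamic causal laws `causes(a, l, φ)`, static causal laws `if(l, φ)`, and
k-propositions `determines(a, θ)`. -/
structure ActionDom (F A : Type) where
  execs : Set (A × Finset (Lit F))
  dyn : Set (A × Lit F × Finset (Lit F))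
  stat : Set (StaticLaw F)
  kprops : Set (A × Finset (Lit F))

namespace ActionDom

variable {F A : Type}

/-- A non-sensing action: one occurring in a dynamic causal law. -/
def NonSensing (D : ActionDom F A) (a : A) : Prop := ∃ l φ, (a, l, φ) ∈ D.dyn

/-- A sensing action: one occurring in a k-proposition. -/
def Sensing (D : ActionDom F A) (a : A) : Prop := ∃ θ, (a, θ) ∈ D.kprops

/-- Structural conditions on a domain description: all components are finite,
every k-proposition senses at least two literals, non-sensing and sensing actions
are disjoint, and each sensing action occurs in at most one k-proposition. -/
structure WellFormed (D : ActionDom F A) : Prop where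
  execs_finite : D.execs.Finite
  dyn_finite : D.dyn.Finite
  stat_finite : D.stat.Finite
  kprops_finite : D.kprops.Finite
  kprops_card : ∀ p ∈ D.kprops, 2 ≤ p.2.card
  sensing_disjoint : ∀ a : A, ¬(D.NonSensing a ∧ D.Sensing a)
  kprops_unique : ∀ a θ₁ θ₂, (a, θ₁) ∈ D.kprops → (a, θ₂) ∈ D.kprops → θ₁ = θ₂

/-- `a` is executable in `σ`: some `executable(a, ψ)` of `D` has `ψ ⊆ σ`. -/
def Executable (D : ActionDom F A) (a : A) (σ : Set (Lit F)) : Prop :=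
  ∃ ψ, (a, ψ) ∈ D.execs ∧ ↑ψ ⊆ σ

/-- `E(a, σ) = {l | D contains causes(a, l, φ) with φ ⊆ σ}`. -/
def Eff (D : ActionDom F A) (a : A) (σ : Set (Lit F)) : Set (Lit F) :=
  {l | ∃ φ, (a, l, φ) ∈ D.dyn ∧ ↑φ ⊆ σ}

/-- `e(a, σ) = Cl_D(E(a, σ))`. -/
def eEff (D : ActionDom F A) (a : A) (σ : Set (Lit F)) : Set (Lit F) :=
  Cl D.stat (D.Eff a σ)

/-- The possible-next-states function
`Res^c_D(a, s) = {s' | s' is a state and s' = Cl_D(E(a,s) ∪ (s ∩ s'))}`. -/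
def ResC (D : ActionDom F A) (a : A) (s : Set (Lit F)) : Set (Set (Lit F)) :=
  {s' | IsState D.stat s' ∧ s' = Cl D.stat (D.Eff a s ∪ (s ∩ s'))}

/-- A consistent domain description: `Res^c_D(a, s) ≠ ∅` for every state `s` and
action `a` executable in `s`. -/
def ConsistentDom (D : ActionDom F A) : Prop :=
  ∀ s a, IsState D.stat s → D.Executable a s → (D.ResC a s).Nonempty

/-- `pc^i(a, δ)`. -/
def pcIter (D : ActionDom F A) (a : A) (δ : Set (Lit F)) : ℕ → Set (Lit F)
  | 0 => {l | ∃ φ, (a, l, φ) ∈ D.dyn ∧ l ∉ δ ∧ negLits ↑φ ∩ δ = ∅}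
  | i + 1 => D.pcIter a δ i ∪
      {l | ∃ r ∈ D.stat, r.head = l ∧ l ∉ δ ∧ (↑r.body ∩ D.pcIter a δ i).Nonempty ∧
        negLits ↑r.body ∩ D.eEff a δ = ∅}

/-- `pc(a, δ) = ⋃_{i ≥ 0} pc^i(a, δ)`. -/
def pc (D : ActionDom F A) (a : A) (δ : Set (Lit F)) : Set (Lit F) :=
  ⋃ i, D.pcIter a δ i

/-- `Cl_D(e(a, δ) ∪ (δ ∖ ¬pc(a, δ)))`, the candidate next a-state after a
non-sensing action. -/
def nsNext (D : ActionDom F A) (a : A) (δ : Set (Lit F)) : Set (Lit F) :=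
  Cl D.stat (D.eEff a δ ∪ (δ \ negLits (D.pc a δ)))

/-- The 0-result function `Res_D(a, δ)` (for `a` executable in `δ`): for a sensing
action with k-proposition `determines(a, θ)`, the consistent sets `Cl_D(δ ∪ {g})`,
`g ∈ θ`; for a non-sensing action, `{Cl_D(e(a,δ) ∪ (δ ∖ ¬pc(a,δ)))}` if consistent,
and `∅` otherwise. -/
def Res (D : ActionDom F A) (a : A) (δ : Set (Lit F)) : Set (Set (Lit F)) :=
  if D.Sensing a then
    {δ' | ∃ θ, (a, θ) ∈ D.kprops ∧ ∃ g ∈ θ, δ' = Cl D.stat (δ ∪ {g}) ∧ ConsistentLits δ'}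
  else
    {δ' | δ' = D.nsNext a δ ∧ ConsistentLits δ'}

/-- The transition function: `⊥` (i.e. `none`) if `a` is not executable in `δ`,
and `Res_D(a, δ)` otherwise. -/
def Phi (D : ActionDom F A) (a : A) (δ : Set (Lit F)) : Option (Set (Set (Lit F))) :=
  if D.Executable a δ then some (D.Res a δ) else none

/-- The assumption that for every k-proposition `determines(a, θ)` of `D`,
in every state exactly one literal of `θ` holds. -/
def OneOfAssumption (D : ActionDom F A) : Prop :=
  ∀ a θ, (a, θ) ∈ D.kprops → ∀ s, IsState D.stat s → ∃! g : Lit F, g ∈ θ ∧ g ∈ s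

end ActionDom

section Aux

variable {F : Type} {D : Set (StaticLaw F)}

lemma subset_Cl (σ : Set (Lit F)) : σ ⊆ Cl D σ :=
  fun _ hl _ hτ => hτ.1 hl

lemma Cl_subset {σ τ : Set (Lit F)} (h1 : σ ⊆ τ) (h2 : ClosedUnder D τ) : Cl D σ ⊆ τ :=
  Set.sInter_subset_of_mem ⟨h1, h2⟩

lemma closed_Cl (σ : Set (Lit F)) : ClosedUnder D (Cl D σ) := by
  intro r hr hbody
  refine Set.mem_sInter.mpr fun τ hτ => ?_
  exact hτ.2 r hr (hbody.trans (Set.sInter_subset_of_mem hτ))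

lemma Interp.consistent {σ : Set (Lit F)} (h : Interp σ) : ConsistentLits σ := by
  rintro ⟨f, b⟩ ⟨h1, h2⟩
  cases b
  · exact (h f).2 ⟨h2, h1⟩
  · exact (h f).2 ⟨h1, h2⟩

lemma Interp.complete {σ : Set (Lit F)} (h : Interp σ) (l : Lit F) :
    l ∈ σ ∨ Lit.compl l ∈ σ := by
  obtain ⟨f, b⟩ := l
  cases b
  · exact ((h f).1).symm.imp id id
  · exact ((h f).1).imp id id

lemma consistent_mono {σ τ : Set (Lit F)} (h : σ ⊆ τ) (hτ : ConsistentLits τ) :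
    ConsistentLits σ :=
  fun l hl => hτ l ⟨h hl.1, h hl.2⟩

lemma lit_compl_compl (l : Lit F) : Lit.compl (Lit.compl l) = l := by
  simp [Lit.compl]

end Aux

/-- For a consistent domain description `D`, a state `s`, an a-state `δ ⊆ s`, and a
non-sensing action `a` executable in `δ`, there is an a-state `δ'` with
`Res_D(a,δ) = {δ'}` and `δ' ⊆ s'` for every `s' ∈ Res^c_D(a,s)`. -/
theorem res_deterministic_and_sound
    {F A : Type} [Finite F] [Finite A]
    (D : ActionDom F A) (hD : D.WellFormed) (hcons : D.ConsistentDom)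
    (s δ : Set (Lit F)) (hs : IsState D.stat s) (hδ : AState D.stat δ) (hsub : δ ⊆ s)
    (a : A) (ha : D.NonSensing a) (hexec : D.Executable a δ) :
    ∃ δ' : Set (Lit F), AState D.stat δ' ∧ D.Res a δ = {δ'} ∧
      ∀ s' ∈ D.ResC a s, δ' ⊆ s' := by
  have hnotsens : ¬ D.Sensing a := fun h => hD.sensing_disjoint a ⟨ha, h⟩
  have hscons : ConsistentLits s := hs.1.consistent
  -- soundness: nsNext a δ ⊆ s' for every s' ∈ ResC a s
  have hsound : ∀ s' ∈ D.ResC a s, D.nsNext a δ ⊆ s' := by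
    rintro s' ⟨hs'state, hs'eq⟩
    have hs'cons : ConsistentLits s' := hs'state.1.consistent
    -- Step A: eEff a δ ⊆ s'
    have hEffs : D.Eff a s ⊆ s' := by
      intro l hl
      rw [hs'eq]
      exact subset_Cl _ (Or.inl hl)
    have heEff : D.eEff a δ ⊆ s' := by
      apply Cl_subset _ hs'state.2
      intro l hl
      obtain ⟨φ, hdyn, hφ⟩ := hl
      exact hEffs ⟨φ, hdyn, hφ.trans hsub⟩
    -- Step B: s' ⊆ s ∪ pc a δ
    have hB : s' ⊆ s ∪ D.pc a δ := by
      have hT : s' ⊆ s' ∩ (s ∪ D.pc a δ) := by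
        conv_lhs => rw [hs'eq]
        apply Cl_subset
        · -- base ⊆ T
          rintro l (hl | hl)
          · refine ⟨hEffs hl, ?_⟩
            by_cases hls : l ∈ s
            · exact Or.inl hls
            · refine Or.inr (Set.mem_iUnion.mpr ⟨0, ?_⟩)
              obtain ⟨φ, hdyn, hφ⟩ := hl
              refine ⟨φ, hdyn, fun hlδ => hls (hsub hlδ), ?_⟩
              ext x
              simp only [Set.mem_inter_iff, Set.mem_empty_iff_false, iff_false, not_and]
              rintro ⟨l', hl', rfl⟩ hxδ
              exact hscons l' ⟨hφ hl', hsub hxδ⟩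
          · exact ⟨hl.2, Or.inl hl.1⟩
        · -- T closed
          intro r hr hbody
          have hbody_s' : ↑r.body ⊆ s' := fun x hx => (hbody hx).1
          have hhead_s' : r.head ∈ s' := hs'state.2 r hr hbody_s'
          refine ⟨hhead_s', ?_⟩
          by_cases hhs : r.head ∈ s
          · exact Or.inl hhs
          · refine Or.inr ?_
            have hnotδ : r.head ∉ δ := fun h => hhs (hsub h)
            -- some body literal is not in s
            have : ∃ l₀ ∈ r.body, l₀ ∉ s := by
              by_contra hcon
              push_neg at hcon
              exact hhs (hs.2 r hr hcon)
            obtain ⟨l₀, hl₀b, hl₀s⟩ := this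
            have : l₀ ∈ D.pc a δ := by
              rcases (hbody hl₀b).2 with h | h
              · exact absurd h hl₀s
              · exact h
            obtain ⟨i, hi⟩ := Set.mem_iUnion.mp this
            refine Set.mem_iUnion.mpr ⟨i + 1, Or.inr ?_⟩
            refine ⟨r, hr, rfl, hnotδ, ⟨l₀, hl₀b, hi⟩, ?_⟩
            ext x
            simp only [Set.mem_inter_iff, Set.mem_empty_iff_false, iff_false, not_and]
            rintro ⟨l', hl', rfl⟩ hxe
            exact hs'cons l' ⟨hbody_s' hl', heEff hxe⟩
      exact fun l hl => (hT hl).2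
    -- Step C: δ \ negLits (pc a δ) ⊆ s'
    have hC : δ \ negLits (D.pc a δ) ⊆ s' := by
      rintro l ⟨hlδ, hlnpc⟩
      rcases hs'state.1.complete l with h | h
      · exact h
      · exfalso
        rcases hB h with hcs | hcpc
        · exact hscons l ⟨hsub hlδ, hcs⟩
        · exact hlnpc ⟨Lit.compl l, hcpc, lit_compl_compl l⟩
    exact Cl_subset (Set.union_subset heEff hC) hs'state.2
  -- consistency of nsNext via a nonempty ResC
  have hexecs : D.Executable a s := by
    obtain ⟨ψ, h1, h2⟩ := hexec
    exact ⟨ψ, h1, h2.trans hsub⟩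
  obtain ⟨s', hs'⟩ := hcons s a hs hexecs
  have hconsns : ConsistentLits (D.nsNext a δ) :=
    consistent_mono (hsound s' hs') hs'.1.1.consistent
  refine ⟨D.nsNext a δ, ⟨hconsns, closed_Cl _⟩, ?_, hsound⟩
  ext δ'
  simp only [ActionDom.Res, if_neg hnotsens, Set.mem_setOf_eq, Set.mem_singleton_iff]
  constructor
  · rintro ⟨rfl, _⟩; rfl
  · rintro rfl; exact ⟨rfl, hconsns⟩

end
end

section
/- Let D be a consistent domain description, δ an a-state, and a a sensing action executable in δ with k-proposition determines(a, θ) in D. If δ is valid, then Res_D(a, δ) contains at least one valid a-state. -/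
noncomputable section
attribute [local instance] Classical.propDecidable

lemma Cl_subset_of_closed {F : Type} {D : Set (StaticLaw F)} {σ τ : Set (Lit F)}
    (h1 : σ ⊆ τ) (h2 : ClosedUnder D τ) : Cl D σ ⊆ τ :=
  Set.sInter_subset_of_mem ⟨h1, h2⟩

lemma Cl_closed {F : Type} (D : Set (StaticLaw F)) (σ : Set (Lit F)) :
    ClosedUnder D (Cl D σ) := by
  intro r hr hbody
  intro τ hτ
  exact hτ.2 r hr (fun l hl => hbody hl τ hτ)

lemma consistent_of_subset_interp {F : Type} {σ s : Set (Lit F)}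
    (hs : Interp s) (hsub : σ ⊆ s) : ConsistentLits σ := by
  rintro ⟨f, b⟩ ⟨h1, h2⟩
  have := (hs f).2
  cases b with
  | true => exact this ⟨hsub h1, hsub h2⟩
  | false => exact this ⟨hsub h2, hsub h1⟩

/-- For a consistent domain description `D`, an a-state `δ`, and a sensing action `a`
executable in `δ` with k-proposition `determines(a, θ)`: if `δ` is valid then
`Res_D(a, δ)` contains at least one valid a-state. -/
theorem res_sensing_contains_valid
    {F A : Type} [Finite F] [Finite A]
    (D : ActionDom F A) (hD : D.WellFormed) (hcons : D.ConsistentDom)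
    (honeof : D.OneOfAssumption)
    (δ : Set (Lit F)) (hδ : AState D.stat δ)
    (a : A) (θ : Finset (Lit F)) (hk : (a, θ) ∈ D.kprops)
    (hexec : D.Executable a δ) (hvalid : ValidA D.stat δ) :
    ∃ δ' ∈ D.Res a δ, AState D.stat δ' ∧ ValidA D.stat δ' := by
  obtain ⟨s, hs, hδs⟩ := hvalid
  obtain ⟨g, ⟨hgθ, hgs⟩, -⟩ := honeof a θ hk s hs
  set δ' := Cl D.stat (δ ∪ {g}) with hδ'
  have hsub : δ ∪ {g} ⊆ s := by
    intro l hl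
    rcases hl with hl | hl
    · exact hδs hl
    · rw [Set.mem_singleton_iff] at hl; subst hl; exact hgs
  have hδ's : δ' ⊆ s := Cl_subset_of_closed hsub hs.2
  have hcons' : ConsistentLits δ' := consistent_of_subset_interp hs.1 hδ's
  refine ⟨δ', ?_, ⟨hcons', Cl_closed _ _⟩, s, hs, hδ's⟩
  unfold ActionDom.Res
  rw [if_pos ⟨θ, hk⟩]
  exact ⟨θ, hk, g, hgθ, rfl, hcons'⟩

end
end

section
/- Let n be a positive integer and let Π be a normal logic program that can be divided into n pairwise disjoint subprograms Π₁, ..., Πₙ, i.e., Π = Π₁ ∪ ... ∪ Πₙ and lit(Πᵢ) ∩ lit(Πⱼ) = ∅ for all i ≠ j. Then a set S of atoms is an answer set of Π if and only if there exist sets S₁, ..., Sₙ of atoms such that S = S₁ ∪ ... ∪ Sₙ and, for each i, Sᵢ is an answer set of Πᵢ. -/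
/-- A rule of a normal logic program: `head ← pos, not neg`. -/
structure NRule (Atom : Type) where
  head : Atom
  pos : Finset Atom
  neg : Finset Atom

/-- The atoms occurring in a rule. -/
def NRule.lits {Atom : Type} (r : NRule Atom) : Set Atom :=
  {r.head} ∪ ↑r.pos ∪ ↑r.neg

/-- `lit(Π)`: the set of atoms occurring in the program `Π`. -/
def progLits {Atom : Type} (P : Set (NRule Atom)) : Set Atom :=
  ⋃ r ∈ P, r.lits

/-- The Gelfond–Lifschitz reduct `Π^S`: the definite program
`{(head(r), pos(r)) | r ∈ Π and neg(r) ∩ S = ∅}`. -/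
def glReduct {Atom : Type} (P : Set (NRule Atom)) (S : Set Atom) :
    Set (Atom × Finset Atom) :=
  {p | ∃ r ∈ P, p = (r.head, r.pos) ∧ ↑r.neg ∩ S = ∅}

/-- `X` is closed under the definite program `Q`. -/
def DefClosed {Atom : Type} (Q : Set (Atom × Finset Atom)) (X : Set Atom) : Prop :=
  ∀ p ∈ Q, ↑p.2 ⊆ X → p.1 ∈ X

/-- `S` is an answer set of `P`: `S` is the ⊆-least set closed under `P^S`. -/
def AnswerSet {Atom : Type} (P : Set (NRule Atom)) (S : Set Atom) : Prop :=
  DefClosed (glReduct P S) S ∧ ∀ X : Set Atom, DefClosed (glReduct P S) X → S ⊆ X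

-- aux lemmas
lemma mem_progLits_head {Atom : Type} {Q : Set (NRule Atom)} {r : NRule Atom}
    (hr : r ∈ Q) : r.head ∈ progLits Q :=
  Set.mem_biUnion hr (by simp [NRule.lits])

lemma pos_subset_progLits {Atom : Type} {Q : Set (NRule Atom)} {r : NRule Atom}
    (hr : r ∈ Q) : ↑r.pos ⊆ progLits Q :=
  fun a ha => Set.mem_biUnion hr (by simp [NRule.lits, ha])

lemma neg_subset_progLits {Atom : Type} {Q : Set (NRule Atom)} {r : NRule Atom}
    (hr : r ∈ Q) : ↑r.neg ⊆ progLits Q :=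
  fun a ha => Set.mem_biUnion hr (by simp [NRule.lits, ha])

lemma answerSet_subset_lits {Atom : Type} {Q : Set (NRule Atom)} {T : Set Atom}
    (h : AnswerSet Q T) : T ⊆ progLits Q := by
  apply h.2
  rintro p ⟨r, hr, hpe, -⟩ _
  subst hpe
  exact mem_progLits_head hr

lemma glReduct_congr {Atom : Type} {Q : Set (NRule Atom)} {S T : Set Atom}
    (h : ∀ r ∈ Q, (↑r.neg ∩ S : Set Atom) = ↑r.neg ∩ T) :
    glReduct Q S = glReduct Q T := by
  ext p
  constructor <;> rintro ⟨r, hr, hpe, hneg⟩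
  · exact ⟨r, hr, hpe, by rw [← h r hr]; exact hneg⟩
  · exact ⟨r, hr, hpe, by rw [h r hr]; exact hneg⟩

/-- Splitting a normal logic program into `n` pairwise atom-disjoint subprograms:
`S` is an answer set of `Π = Π₁ ∪ ... ∪ Πₙ` iff `S = S₁ ∪ ... ∪ Sₙ` where each `Sᵢ`
is an answer set of `Πᵢ`. -/
theorem answerSet_iUnion_iff_of_disjoint
    {Atom : Type} (n : ℕ) (hn : 0 < n)
    (P : Set (NRule Atom)) (Ps : Fin n → Set (NRule Atom))
    (hU : P = ⋃ i, Ps i)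
    (hdisj : ∀ i j : Fin n, i ≠ j → progLits (Ps i) ∩ progLits (Ps j) = ∅)
    (S : Set Atom) :
    AnswerSet P S ↔
      ∃ Ss : Fin n → Set Atom, S = (⋃ i, Ss i) ∧ ∀ i, AnswerSet (Ps i) (Ss i) := by
  have hPL : progLits P = ⋃ i, progLits (Ps i) := by
    rw [hU]; simp only [progLits, Set.biUnion_iUnion]
  constructor
  · intro hS
    set Ss : Fin n → Set Atom := fun i => S ∩ progLits (Ps i) with hSs
    have hSU : S = ⋃ i, Ss i := by
      apply Set.Subset.antisymm
      · intro a ha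
        have h1 : a ∈ progLits P := answerSet_subset_lits hS ha
        rw [hPL] at h1
        obtain ⟨_, ⟨i, rfl⟩, hi⟩ := h1
        exact Set.mem_iUnion.2 ⟨i, ha, hi⟩
      · exact Set.iUnion_subset fun i => Set.inter_subset_left
    -- reduct of Ps i w.r.t. Ss i equals w.r.t. S
    have hred : ∀ i, glReduct (Ps i) (Ss i) = glReduct (Ps i) S := by
      intro i
      apply glReduct_congr
      intro r hr
      ext a
      simp only [Set.mem_inter_iff, hSs]
      constructor
      · rintro ⟨hneg, hS', -⟩; exact ⟨hneg, hS'⟩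
      · rintro ⟨hneg, hS'⟩; exact ⟨hneg, hS', neg_subset_progLits hr hneg⟩
    refine ⟨Ss, hSU, fun i => ⟨?_, ?_⟩⟩
    · -- closed
      rintro p hp hsub
      rw [hred i] at hp
      obtain ⟨r, hr, hpe, hneg⟩ := hp
      subst hpe
      have hhd : r.head ∈ S := by
        apply hS.1 (r.head, r.pos) ⟨r, (hU ▸ Set.mem_iUnion.2 ⟨i, hr⟩), rfl, hneg⟩
        exact hsub.trans Set.inter_subset_left
      exact ⟨hhd, mem_progLits_head hr⟩
    · -- minimal
      intro X hX
      rw [hred i] at hX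
      set Y : Set Atom := (X ∩ progLits (Ps i)) ∪ (S \ progLits (Ps i)) with hY
      have hSY : S ⊆ Y := by
        apply hS.2
        rintro p ⟨r, hr, hpe, hneg⟩ hsub
        subst hpe
        rw [hU] at hr
        obtain ⟨_, ⟨j, rfl⟩, hrj⟩ := hr
        by_cases hij : j = i
        · subst hij
          have hposX : (↑r.pos : Set Atom) ⊆ X := by
            intro a ha
            rcases hsub ha with ⟨haX, -⟩ | ⟨-, hna⟩
            · exact haX
            · exact absurd (pos_subset_progLits hrj ha) hna
          have : r.head ∈ X := hX (r.head, r.pos) ⟨r, hrj, rfl, hneg⟩ hposX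
          exact Or.inl ⟨this, mem_progLits_head hrj⟩
        · have hdj := hdisj j i hij
          have hposS : (↑r.pos : Set Atom) ⊆ S := by
            intro a ha
            rcases hsub ha with ⟨-, hai⟩ | ⟨haS, -⟩
            · exfalso
              have : a ∈ progLits (Ps j) ∩ progLits (Ps i) :=
                ⟨pos_subset_progLits hrj ha, hai⟩
              rw [hdj] at this; exact this
            · exact haS
          have hhd : r.head ∈ S :=
            hS.1 (r.head, r.pos) ⟨r, (hU ▸ Set.mem_iUnion.2 ⟨j, hrj⟩), rfl, hneg⟩ hposS
          refine Or.inr ⟨hhd, fun hhi => ?_⟩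
          have : r.head ∈ progLits (Ps j) ∩ progLits (Ps i) :=
            ⟨mem_progLits_head hrj, hhi⟩
          rw [hdj] at this; exact this
      intro a ha
      rcases ha with ⟨haS, hai⟩
      rcases hSY haS with ⟨haX, -⟩ | ⟨-, hna⟩
      · exact haX
      · exact absurd hai hna
  · rintro ⟨Ss, rfl, hAS⟩
    have hSsub : ∀ i, Ss i ⊆ progLits (Ps i) := fun i => answerSet_subset_lits (hAS i)
    -- key: for r ∈ Ps i, neg ∩ S = neg ∩ Ss i
    have hkey : ∀ i, ∀ r ∈ Ps i, (↑r.neg ∩ (⋃ j, Ss j) : Set Atom) = ↑r.neg ∩ Ss i := by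
      intro i r hr
      ext a
      simp only [Set.mem_inter_iff, Set.mem_iUnion]
      constructor
      · rintro ⟨hneg, j, haj⟩
        refine ⟨hneg, ?_⟩
        by_cases hij : j = i
        · exact hij ▸ haj
        · exfalso
          have : a ∈ progLits (Ps j) ∩ progLits (Ps i) :=
            ⟨hSsub j haj, neg_subset_progLits hr hneg⟩
          rw [hdisj j i hij] at this; exact this
      · rintro ⟨hneg, ha⟩; exact ⟨hneg, i, ha⟩
    have hred : ∀ i, glReduct (Ps i) (⋃ j, Ss j) = glReduct (Ps i) (Ss i) :=
      fun i => glReduct_congr (hkey i)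
    have hSinter : ∀ i, (⋃ j, Ss j) ∩ progLits (Ps i) = Ss i := by
      intro i
      apply Set.Subset.antisymm
      · rintro a ⟨ha, hai⟩
        obtain ⟨j, haj⟩ := Set.mem_iUnion.1 ha
        by_cases hij : j = i
        · exact hij ▸ haj
        · exfalso
          have : a ∈ progLits (Ps j) ∩ progLits (Ps i) := ⟨hSsub j haj, hai⟩
          rw [hdisj j i hij] at this; exact this
      · exact fun a ha => ⟨Set.mem_iUnion.2 ⟨i, ha⟩, hSsub i ha⟩
    constructor
    · rintro p hp hsub
      rw [hU] at hp
      obtain ⟨r, hr, hpe, hneg⟩ := hp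
      obtain ⟨_, ⟨i, rfl⟩, hri⟩ := hr
      subst hpe
      have hposS : (↑r.pos : Set Atom) ⊆ Ss i := by
        intro a ha
        rw [← hSinter i]
        exact ⟨hsub ha, pos_subset_progLits hri ha⟩
      have : r.head ∈ Ss i := by
        apply (hAS i).1 (r.head, r.pos) _ hposS
        rw [← hred i]
        exact ⟨r, hri, rfl, hneg⟩
      exact Set.mem_iUnion.2 ⟨i, this⟩
    · intro X hX
      apply Set.iUnion_subset
      intro i
      apply (hAS i).2
      rintro p hp hsub
      rw [← hred i] at hp
      obtain ⟨r, hr, hpe, hneg⟩ := hp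
      exact hX p ⟨r, hU ▸ Set.mem_iUnion.2 ⟨i, hr⟩, hpe, hneg⟩ hsub
end
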